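/- arXiv:1012.2898 — 3 statements merged into one kernel-verified Lean document; each statement's English description precedes it below -/
import Mathlib

section
/- Let 𝔊 be a self-adjoint Lie subalgebra of M(n,ℝ) whose center is trivial. Then 𝔊 is semisimple, i.e. its Killing form is nondegenerate. Moreover the Killing form is negative definite on 𝔎 = {X ∈ 𝔊 : Xᵀ = −X}, positive definite on 𝔓 = {X ∈ 𝔊 : Xᵀ = X}, and B(𝔎,𝔓) = {0}. -/
open Matrix Filter Topology

attribute [local instance 100] LieRing.ofAssociativeRing

noncomputable section

/-- The space M(n,ℝ) of n × n real matrices. -/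
abbrev Mat (n : ℕ) := Matrix (Fin n) (Fin n) ℝ

/-- ℝⁿ with its standard (Euclidean) inner product. -/
abbrev Euc (n : ℕ) := EuclideanSpace ℝ (Fin n)

/-- The action of a matrix on Euclidean space. -/
def act {n : ℕ} (X : Mat n) (v : Euc n) : Euc n := Matrix.toEuclideanLin X v

/-- The matrix exponential. -/
def mexp {n : ℕ} (X : Mat n) : Mat n := NormedSpace.exp X

/-- The canonical inner product ⟨A,B⟩ = trace (A Bᵀ) on M(n,ℝ). -/
def minner {n : ℕ} (A B : Mat n) : ℝ := Matrix.trace (A * Bᵀ)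

/-- The norm associated to the canonical inner product on M(n,ℝ). -/
def mnorm {n : ℕ} (A : Mat n) : ℝ := Real.sqrt (minner A A)

/-- The Lie algebra 𝔊 of a subgroup G of GL(n,ℝ):
𝔊 = {X ∈ M(n,ℝ) : exp(tX) ∈ G for all t ∈ ℝ}. -/
def lieAlgOf {n : ℕ} (G : Subgroup (GL (Fin n) ℝ)) : Set (Mat n) :=
  {X | ∀ t : ℝ, ∃ g ∈ G, (g : Mat n) = mexp (t • X)}

/-- G is self-adjoint: gᵀ ∈ G whenever g ∈ G. -/
def IsSelfAdjointSubgroup {n : ℕ} (G : Subgroup (GL (Fin n) ℝ)) : Prop :=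
  ∀ g ∈ G, ∃ h ∈ G, (h : Mat n) = (g : Mat n)ᵀ

/-- 𝔎 : the set of skew-symmetric elements of the Lie algebra of G. -/
def kSet {n : ℕ} (G : Subgroup (GL (Fin n) ℝ)) : Set (Mat n) :=
  {X ∈ lieAlgOf G | Xᵀ = -X}

/-- 𝔊_v : the stabilizer subalgebra {X ∈ 𝔊 : X(v) = 0}. -/
def stabAlg {n : ℕ} (G : Subgroup (GL (Fin n) ℝ)) (v : Euc n) : Set (Mat n) :=
  {X ∈ lieAlgOf G | act X v = 0}

/-- 𝔓̃_v : the orthogonal complement of 𝔎 + 𝔊_v in 𝔊 w.r.t. the canonical inner product. -/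
def tildeP {n : ℕ} (G : Subgroup (GL (Fin n) ℝ)) (v : Euc n) : Set (Mat n) :=
  {X ∈ lieAlgOf G | ∀ Y : Mat n, (Y ∈ kSet G ∨ Y ∈ stabAlg G v) → minner X Y = 0}

/-- `v` has a nonzero component in the μ-eigenspace of X. -/
def hasComp {n : ℕ} (X : Mat n) (v : Euc n) (μ : ℝ) : Prop :=
  (Module.End.eigenspace (Matrix.toEuclideanLin X) μ).orthogonalProjectionOnto v ≠ 0

/-- λ_X(v) : the largest eigenvalue μ of X such that v has a nonzero component
in the μ-eigenspace of X. -/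
def lambdaOf {n : ℕ} (X : Mat n) (v : Euc n) : ℝ := sSup {μ : ℝ | hasComp X v μ}

/-- μ_X(v) : the smallest eigenvalue μ of X such that v has a nonzero component
in the μ-eigenspace of X. -/
def muOf {n : ℕ} (X : Mat n) (v : Euc n) : ℝ := sInf {μ : ℝ | hasComp X v μ}

/-- λ⁻(v) = inf {λ_X(v) : X ∈ 𝔓̃_v, |X| = 1}. -/
def lamMinus {n : ℕ} (G : Subgroup (GL (Fin n) ℝ)) (v : Euc n) : ℝ :=
  sInf {r : ℝ | ∃ X ∈ tildeP G v, mnorm X = 1 ∧ r = lambdaOf X v}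

/-- λ⁺(v) = sup {λ_X(v) : X ∈ 𝔓̃_v, |X| = 1}. -/
def lamPlus {n : ℕ} (G : Subgroup (GL (Fin n) ℝ)) (v : Euc n) : ℝ :=
  sSup {r : ℝ | ∃ X ∈ tildeP G v, mnorm X = 1 ∧ r = lambdaOf X v}

/-- The orbit G(v). -/
def orbitOf {n : ℕ} (G : Subgroup (GL (Fin n) ℝ)) (v : Euc n) : Set (Euc n) :=
  {w | ∃ g ∈ G, w = act (g : Mat n) v}

/-- v is a minimal vector for G : |g(v)| ≥ |v| for all g ∈ G. -/
def IsMinimalVec {n : ℕ} (G : Subgroup (GL (Fin n) ℝ)) (v : Euc n) : Prop :=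
  ∀ g ∈ G, ‖v‖ ≤ ‖act (g : Mat n) v‖

/-!
For the trace inner product `⟨A, B⟩ = tr (A Bᵀ)` on `𝔊`, transposition turns `ad X` into its
adjoint: `ad (Xᵀ) = (ad X)*`. Hence `B(Xᵀ, Y) = tr ((ad X)* ∘ ad Y)` is a Hilbert–Schmidt inner
product of `ad X` and `ad Y`, so `B(Xᵀ, X) > 0` as soon as `ad X ≠ 0`, i.e. `X ≠ 0` when the
center is trivial. Specialising to `Xᵀ = ±X` gives the signs on `𝔓` and `𝔎`, the symmetry of
the Hilbert–Schmidt product gives `B(𝔎, 𝔓) = 0`, and pairing `X` with `Xᵀ` gives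
nondegeneracy.
-/

open scoped RealInnerProductSpace

namespace LinearMap

variable {E ι : Type*} [NormedAddCommGroup E] [InnerProductSpace ℝ E] [FiniteDimensional ℝ E]
  [Fintype ι]

lemma trace_adjoint_comp_eq_sum_inner (f g : E →ₗ[ℝ] E) (b : OrthonormalBasis ι ℝ E) :
    (f.adjoint ∘ₗ g).trace ℝ E = ∑ i, ⟪f (b i), g (b i)⟫ := by
  simp only [trace_eq_sum_inner _ b, comp_apply, adjoint_inner_right]

lemma trace_adjoint_comp_comm (f g : E →ₗ[ℝ] E) :
    (f.adjoint ∘ₗ g).trace ℝ E = (g.adjoint ∘ₗ f).trace ℝ E := by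
  let b := stdOrthonormalBasis ℝ E
  simp only [trace_adjoint_comp_eq_sum_inner _ _ b, real_inner_comm]

lemma trace_adjoint_comp_self_pos {f : E →ₗ[ℝ] E} (hf : f ≠ 0) :
    0 < (f.adjoint ∘ₗ f).trace ℝ E := by
  let b := stdOrthonormalBasis ℝ E
  rw [trace_adjoint_comp_eq_sum_inner _ _ b]
  obtain ⟨i, hi⟩ : ∃ i, f (b i) ≠ 0 := by
    by_contra! h
    exact hf (b.toBasis.ext fun i => by simpa using h i)
  exact Finset.sum_pos' (fun j _ => real_inner_self_nonneg)
    ⟨i, Finset.mem_univ i, real_inner_self_pos.mpr hi⟩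

end LinearMap

namespace LieSubalgebra

variable {ι : Type*} [Fintype ι] [DecidableEq ι] (𝔊 : LieSubalgebra ℝ (Matrix ι ι ℝ))

lemma ad_ne_zero {X : 𝔊} (hX : X ≠ 0)
    (hcenter : ∀ X ∈ 𝔊, (∀ Y ∈ 𝔊, ⁅X, Y⁆ = 0) → X = 0) : LieAlgebra.ad ℝ 𝔊 X ≠ 0 := by
  intro had
  refine hX (Subtype.ext (hcenter X X.2 fun Y hY => ?_))
  have h : ⁅X, (⟨Y, hY⟩ : 𝔊)⁆ = 0 := by simpa using LinearMap.congr_fun had ⟨Y, hY⟩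
  simpa using congrArg Subtype.val h

@[reducible] def frobeniusCore : InnerProductSpace.Core ℝ 𝔊 where
  inner A B := ((A : Matrix ι ι ℝ) * (B : Matrix ι ι ℝ)ᵀ).trace
  conj_inner_symm A B := by
    rw [starRingEnd_apply, star_trivial, ← Matrix.trace_transpose, Matrix.transpose_mul,
      Matrix.transpose_transpose]
  re_inner_nonneg A := by
    simpa [← Matrix.conjTranspose_eq_transpose_of_trivial] using
      (Matrix.posSemidef_self_mul_conjTranspose (A : Matrix ι ι ℝ)).trace_nonneg
  definite A h := Subtype.ext <| Matrix.trace_mul_conjTranspose_self_eq_zero_iff.mp <| by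
    simpa [Matrix.conjTranspose_eq_transpose_of_trivial] using h
  add_left A B C := by simp [Matrix.add_mul]
  smul_left A B r := by simp

@[reducible] def frobeniusNormedAddCommGroup : NormedAddCommGroup 𝔊 :=
  (frobeniusCore 𝔊).toNormedAddCommGroup

attribute [local instance] frobeniusNormedAddCommGroup

@[reducible] def frobeniusInnerProductSpace : InnerProductSpace ℝ 𝔊 :=
  InnerProductSpace.ofCore (frobeniusCore 𝔊).toCore

attribute [local instance] frobeniusInnerProductSpace

variable {𝔊}

lemma inner_eq_trace_mul_transpose (A B : 𝔊) : ⟪A, B⟫ = ((A : Matrix ι ι ℝ) * (B : Matrix ι ι ℝ)ᵀ).trace :=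
  rfl

lemma adjoint_ad_of_coe_eq_transpose {X Xt : 𝔊}
    (h : (Xt : Matrix ι ι ℝ) = (X : Matrix ι ι ℝ)ᵀ) :
    (LieAlgebra.ad ℝ 𝔊 X : 𝔊 →ₗ[ℝ] 𝔊).adjoint = LieAlgebra.ad ℝ 𝔊 Xt := by
  refine ((LinearMap.eq_adjoint_iff _ _).mpr fun A B => ?_).symm
  simp only [LieAlgebra.ad_apply, inner_eq_trace_mul_transpose, coe_bracket, Ring.lie_def, h,
    Matrix.transpose_sub, Matrix.transpose_mul, Matrix.sub_mul, Matrix.mul_sub, Matrix.trace_sub,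
    Matrix.mul_assoc]
  rw [Matrix.trace_mul_comm (Xᵀ : Matrix ι ι ℝ), Matrix.mul_assoc]

lemma killingForm_eq_trace_adjoint_comp {X Xt : 𝔊}
    (h : (Xt : Matrix ι ι ℝ) = (X : Matrix ι ι ℝ)ᵀ) (Y : 𝔊) :
    killingForm ℝ 𝔊 Xt Y =
      ((LieAlgebra.ad ℝ 𝔊 X : 𝔊 →ₗ[ℝ] 𝔊).adjoint ∘ₗ LieAlgebra.ad ℝ 𝔊 Y).trace ℝ 𝔊 := by
  rw [adjoint_ad_of_coe_eq_transpose h, killingForm_apply_apply]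

lemma killingForm_pos_of_coe_eq_transpose {X Xt : 𝔊}
    (h : (Xt : Matrix ι ι ℝ) = (X : Matrix ι ι ℝ)ᵀ) (hX : LieAlgebra.ad ℝ 𝔊 X ≠ 0) :
    0 < killingForm ℝ 𝔊 Xt X := by
  rw [killingForm_eq_trace_adjoint_comp h]
  exact LinearMap.trace_adjoint_comp_self_pos (by exact_mod_cast hX)

lemma killingForm_comm_of_coe_eq_transpose {X Xt Y Yt : 𝔊}
    (hX : (Xt : Matrix ι ι ℝ) = (X : Matrix ι ι ℝ)ᵀ)
    (hY : (Yt : Matrix ι ι ℝ) = (Y : Matrix ι ι ℝ)ᵀ) :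
    killingForm ℝ 𝔊 Xt Y = killingForm ℝ 𝔊 Yt X := by
  rw [killingForm_eq_trace_adjoint_comp hX, killingForm_eq_trace_adjoint_comp hY,
    LinearMap.trace_adjoint_comp_comm]

end LieSubalgebra

open LieSubalgebra in
/-- A self-adjoint Lie subalgebra 𝔊 of M(n,ℝ) with trivial center is
semisimple (its Killing form B is nondegenerate); moreover B is negative definite on
𝔎 = {X ∈ 𝔊 : Xᵀ = -X}, positive definite on 𝔓 = {X ∈ 𝔊 : Xᵀ = X}, and B(𝔎,𝔓) = 0. -/
theorem stmt1 {n : ℕ} (𝔊 : LieSubalgebra ℝ (Mat n))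
    (hsa : ∀ X ∈ 𝔊, Xᵀ ∈ 𝔊)
    (hcenter : ∀ X ∈ 𝔊, (∀ Y ∈ 𝔊, ⁅X, Y⁆ = 0) → X = 0) :
    (killingForm ℝ 𝔊).Nondegenerate
    ∧ (∀ X : 𝔊, (X : Mat n)ᵀ = -(X : Mat n) → X ≠ 0 → killingForm ℝ 𝔊 X X < 0)
    ∧ (∀ X : 𝔊, (X : Mat n)ᵀ = (X : Mat n) → X ≠ 0 → 0 < killingForm ℝ 𝔊 X X)
    ∧ (∀ X Y : 𝔊, (X : Mat n)ᵀ = -(X : Mat n) → (Y : Mat n)ᵀ = (Y : Mat n) →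
        killingForm ℝ 𝔊 X Y = 0) := by
  refine ⟨?_, fun X hX hX0 => ?_, fun X hX hX0 => ?_, fun X Y hX hY => ?_⟩
  · refine (LieModule.traceForm_isSymm ℝ 𝔊 𝔊).isRefl.nondegenerate_iff_separatingLeft.mpr
      fun X hX => ?_
    by_contra hX0
    have hpos := killingForm_pos_of_coe_eq_transpose (Xt := ⟨_, hsa X X.2⟩) rfl
      (ad_ne_zero 𝔊 hX0 hcenter)
    rw [LieModule.traceForm_comm, hX] at hpos
    exact hpos.false
  · simpa using
      killingForm_pos_of_coe_eq_transpose (Xt := -X) hX.symm (ad_ne_zero 𝔊 hX0 hcenter)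
  · exact killingForm_pos_of_coe_eq_transpose hX.symm (ad_ne_zero 𝔊 hX0 hcenter)
  · have h := killingForm_comm_of_coe_eq_transpose (Xt := -X) hX.symm hY.symm
    rw [map_neg, LinearMap.neg_apply, LieModule.traceForm_comm ℝ 𝔊 𝔊 Y] at h
    linarith
end
end

section
/- Let 𝔊 be a self-adjoint Lie subalgebra of M(n,ℝ) that acts irreducibly on ℝⁿ, and let Z(𝔊) denote its center. Let 𝔎 = {X ∈ 𝔊 : Xᵀ = −X} and 𝔓 = {X ∈ 𝔊 : Xᵀ = X}. Then: (1) Z(𝔊) = (Z(𝔊) ∩ 𝔓) ⊕ (Z(𝔊) ∩ 𝔎); (2) if Z(𝔊) ∩ 𝔓 ≠ {0}, then Z(𝔊) ∩ 𝔓 = ℝ·Id; (3) if Z(𝔊) ∩ 𝔎 ≠ {0}, then Z(𝔊) ∩ 𝔎 = ℝ·J for some matrix J with J² = −Id. -/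
open Matrix Filter Topology

noncomputable section

attribute [local instance 100] LieRing.ofAssociativeRing

/-!
Everything rests on Schur's lemma: a symmetric matrix commuting with 𝔊 has an eigenspace that
is 𝔊-invariant, hence all of ℝⁿ by irreducibility, so the matrix is scalar. Since 𝔊 is
self-adjoint, its center is stable under transposition, which gives (1), and its symmetric
elements are scalar, which gives (2). For skew-symmetric central K and L the product KL is
symmetric and commutes with 𝔊, hence scalar. In particular K² = μ·1 with μ < 0 because
tr(KᵀK) > 0, so J = K/√(-μ) satisfies J² = -1, and every skew-symmetric central X equals
-J(JX) ∈ ℝJ.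
-/

theorem Set.exists_mem_ne_of_ne_singleton {α : Type*} {s : Set α} {a : α} (hs : s ≠ {a})
    (ha : a ∈ s) : ∃ b ∈ s, b ≠ a :=
  (Set.not_subsingleton_iff.1 (mt (Set.subsingleton_iff_singleton ha).1 hs)).exists_ne a

theorem Matrix.existsUnique_symm_add_skew {ι : Type*} (V : Submodule ℝ (Matrix ι ι ℝ))
    (hV : ∀ X ∈ V, Xᵀ ∈ V) {X : Matrix ι ι ℝ} (hX : X ∈ V) :
    ∃! p : Matrix ι ι ℝ × Matrix ι ι ℝ,
      (p.1 ∈ V ∧ p.1ᵀ = p.1) ∧ (p.2 ∈ V ∧ p.2ᵀ = -p.2) ∧ X = p.1 + p.2 := by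
  refine ⟨((2 : ℝ)⁻¹ • (X + Xᵀ), (2 : ℝ)⁻¹ • (X - Xᵀ)),
    ⟨⟨V.smul_mem _ (V.add_mem hX (hV X hX)), ?_⟩,
      ⟨V.smul_mem _ (V.sub_mem hX (hV X hX)), ?_⟩, by module⟩, ?_⟩
  · simp [add_comm]
  · simp [← smul_neg]
  · rintro ⟨S, K⟩ ⟨⟨-, hS⟩, ⟨-, hK⟩, rfl⟩
    have hT : (S + K)ᵀ = S - K := by rw [transpose_add, hS, hK, sub_eq_add_neg]
    rw [hT]
    ext1 <;> module

theorem Matrix.neg_of_transpose_eq_neg_of_mul_self_eq_smul_one {ι : Type*} [Fintype ι]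
    [DecidableEq ι] {K : Matrix ι ι ℝ} {μ : ℝ} (hK : Kᵀ = -K) (hK0 : K ≠ 0)
    (hKK : K * K = μ • 1) : μ < 0 := by
  rcases isEmpty_or_nonempty ι with hι | hι
  · exact absurd (Subsingleton.elim K 0) hK0
  have hpos : 0 < (Kᴴ * K).trace :=
    (posSemidef_conjTranspose_mul_self K).trace_nonneg.lt_of_ne'
      (mt trace_conjTranspose_mul_self_eq_zero_iff.1 hK0)
  have htrace : (Kᴴ * K).trace = -μ * Fintype.card ι := by
    rw [conjTranspose_eq_transpose_of_trivial, hK, neg_mul, hKK, trace_neg, trace_smul,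
      trace_one, smul_eq_mul, neg_mul]
  have hcard : (0 : ℝ) < Fintype.card ι := Nat.cast_pos.2 Fintype.card_pos
  rw [htrace] at hpos
  nlinarith

section Irreducible

variable {n : ℕ}

def ActsIrreducibly (S : Set (Mat n)) : Prop :=
  ∀ W : Submodule ℝ (Euc n), (∀ X ∈ S, ∀ w ∈ W, act X w ∈ W) → W = ⊥ ∨ W = ⊤

theorem ActsIrreducibly.exists_eq_smul_one_of_commute {S : Set (Mat n)}
    (hirr : ActsIrreducibly S) {M : Mat n} (hM : Mᵀ = M) (hcomm : ∀ X ∈ S, Commute M X) :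
    ∃ μ : ℝ, M = μ • 1 := by
  rcases isEmpty_or_nonempty (Fin n) with hn | hn
  · exact ⟨0, Subsingleton.elim _ _⟩
  set T := toEuclideanLin M
  have hT : T.IsSymmetric := isSymmetric_toEuclideanLin_iff.2 (isHermitian_iff_isSymm.2 hM)
  obtain ⟨μ, hμ⟩ : ∃ μ : ℝ, Module.End.HasEigenvalue T μ :=
    ⟨_, hT.hasEigenvalue_iSup_of_finiteDimensional⟩
  have hinv : ∀ X ∈ S, ∀ w ∈ Module.End.eigenspace T μ, act X w ∈ Module.End.eigenspace T μ :=
    fun X hX _ hw => Module.End.mapsTo_genEigenspace_of_comm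
      ((hcomm X hX).map (toLpLinAlgEquiv 2 (R := ℝ) (n := Fin n))) μ 1 hw
  refine ⟨μ, toEuclideanLin.injective ?_⟩
  rcases hirr _ hinv with h | h
  · exact absurd h hμ
  · rw [Module.End.eigenspace_def, LinearMap.ker_eq_top, sub_eq_zero] at h
    simpa [T, Module.End.one_eq_id] using h

variable (𝔊 : LieSubalgebra ℝ (Mat n))

def lieCenter : Submodule ℝ (Mat n) where
  carrier := {X | X ∈ 𝔊 ∧ ∀ Y ∈ 𝔊, Commute X Y}
  add_mem' hX hY := ⟨𝔊.add_mem hX.1 hY.1, fun Z hZ => (hX.2 Z hZ).add_left (hY.2 Z hZ)⟩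
  zero_mem' := ⟨𝔊.zero_mem, fun Z _ => Commute.zero_left Z⟩
  smul_mem' c _ hX := ⟨𝔊.smul_mem c hX.1, fun Z hZ => (hX.2 Z hZ).smul_left c⟩

variable {𝔊}

theorem coe_lieCenter :
    (lieCenter 𝔊 : Set (Mat n)) = {X : Mat n | X ∈ 𝔊 ∧ ∀ Y ∈ 𝔊, ⁅X, Y⁆ = 0} := by
  simp only [← commute_iff_lie_eq]
  rfl

theorem transpose_mem_lieCenter (hsa : ∀ X ∈ 𝔊, Xᵀ ∈ 𝔊) {X : Mat n} (hX : X ∈ lieCenter 𝔊) :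
    Xᵀ ∈ lieCenter 𝔊 := by
  refine ⟨hsa X hX.1, fun Y hY => ?_⟩
  have h := congrArg transpose (hX.2 Yᵀ (hsa Y hY))
  simp only [transpose_mul, transpose_transpose] at h
  exact h.symm

theorem symm_lieCenter_eq_smul_one (hirr : ActsIrreducibly (𝔊 : Set (Mat n))) {S : Mat n}
    (hS : S ∈ lieCenter 𝔊) (hST : Sᵀ = S) (hS0 : S ≠ 0) :
    {X : Mat n | X ∈ lieCenter 𝔊 ∧ Xᵀ = X} = {X : Mat n | ∃ c : ℝ, X = c • 1} := by
  obtain ⟨μ, rfl⟩ := hirr.exists_eq_smul_one_of_commute hST hS.2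
  have hμ : μ ≠ 0 := by rintro rfl; simp at hS0
  ext X
  refine ⟨fun hX => hirr.exists_eq_smul_one_of_commute hX.2 hX.1.2, ?_⟩
  rintro ⟨c, rfl⟩
  have hc : c • (1 : Mat n) = (c / μ) • μ • 1 := by rw [smul_smul, div_mul_cancel₀ c hμ]
  exact ⟨hc ▸ (lieCenter 𝔊).smul_mem _ hS, by simp⟩

theorem exists_mul_eq_smul_one_of_skew_mem_lieCenter (hirr : ActsIrreducibly (𝔊 : Set (Mat n)))
    {A B : Mat n} (hA : A ∈ lieCenter 𝔊) (hAT : Aᵀ = -A) (hB : B ∈ lieCenter 𝔊)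
    (hBT : Bᵀ = -B) : ∃ c : ℝ, A * B = c • 1 :=
  hirr.exists_eq_smul_one_of_commute
    (by rw [transpose_mul, hAT, hBT, neg_mul_neg, hA.2 B hB.1])
    fun Y hY => (hA.2 Y hY).mul_left (hB.2 Y hY)

theorem exists_skew_lieCenter_eq_smul (hirr : ActsIrreducibly (𝔊 : Set (Mat n))) {K : Mat n}
    (hK : K ∈ lieCenter 𝔊) (hKT : Kᵀ = -K) (hK0 : K ≠ 0) :
    ∃ J : Mat n, J * J = -1 ∧
      {X : Mat n | X ∈ lieCenter 𝔊 ∧ Xᵀ = -X} = {X : Mat n | ∃ c : ℝ, X = c • J} := by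
  obtain ⟨μ, hKK⟩ := exists_mul_eq_smul_one_of_skew_mem_lieCenter hirr hK hKT hK hKT
  have hμ : μ < 0 := neg_of_transpose_eq_neg_of_mul_self_eq_smul_one hKT hK0 hKK
  set J := (√(-μ))⁻¹ • K
  have hJJ : J * J = -1 := by
    have : (√(-μ))⁻¹ * (√(-μ))⁻¹ * μ = -1 := by
      rw [← mul_inv, Real.mul_self_sqrt (neg_nonneg.2 hμ.le), inv_neg, neg_mul,
        inv_mul_cancel₀ hμ.ne]
    rw [smul_mul_smul_comm, hKK, smul_smul, this, neg_one_smul]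
  have hJ : J ∈ lieCenter 𝔊 := (lieCenter 𝔊).smul_mem _ hK
  have hJT : Jᵀ = -J := by rw [transpose_smul, hKT, smul_neg]
  refine ⟨J, hJJ, Set.ext fun X => ⟨fun ⟨hX, hXT⟩ => ?_, ?_⟩⟩
  · obtain ⟨c, hc⟩ := exists_mul_eq_smul_one_of_skew_mem_lieCenter hirr hJ hJT hX hXT
    refine ⟨-c, ?_⟩
    calc X = -(J * J * X) := by rw [hJJ, neg_one_mul, neg_neg]
      _ = (-c) • J := by rw [mul_assoc, hc, Matrix.mul_smul, mul_one, neg_smul]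
  · rintro ⟨c, rfl⟩
    exact ⟨(lieCenter 𝔊).smul_mem c hJ, by rw [transpose_smul, hJT, smul_neg]⟩

end Irreducible

/-- Let 𝔊 be a self-adjoint Lie subalgebra of M(n,ℝ) acting irreducibly on ℝⁿ,
with center Z(𝔊), 𝔎 = {X ∈ 𝔊 : Xᵀ = -X} and 𝔓 = {X ∈ 𝔊 : Xᵀ = X}. Then
(1) Z(𝔊) = (Z(𝔊) ∩ 𝔓) ⊕ (Z(𝔊) ∩ 𝔎);
(2) if Z(𝔊) ∩ 𝔓 ≠ {0} then Z(𝔊) ∩ 𝔓 = ℝ·Id;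
(3) if Z(𝔊) ∩ 𝔎 ≠ {0} then Z(𝔊) ∩ 𝔎 = ℝ·J for some J with J² = -Id. -/
theorem stmt2 {n : ℕ} (𝔊 : LieSubalgebra ℝ (Mat n))
    (hsa : ∀ X ∈ 𝔊, Xᵀ ∈ 𝔊)
    (hirr : ∀ W : Submodule ℝ (Euc n), (∀ X ∈ 𝔊, ∀ w ∈ W, act X w ∈ W) → W = ⊥ ∨ W = ⊤)
    (Z : Set (Mat n))
    (hZ : Z = {X : Mat n | X ∈ 𝔊 ∧ ∀ Y ∈ 𝔊, ⁅X, Y⁆ = 0}) :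
    (∀ X ∈ Z, ∃! p : Mat n × Mat n,
        (p.1 ∈ Z ∧ p.1ᵀ = p.1) ∧ (p.2 ∈ Z ∧ p.2ᵀ = -p.2) ∧ X = p.1 + p.2)
    ∧ ({X : Mat n | X ∈ Z ∧ Xᵀ = X} ≠ {0} →
        {X : Mat n | X ∈ Z ∧ Xᵀ = X} = {X : Mat n | ∃ c : ℝ, X = c • (1 : Mat n)})
    ∧ ({X : Mat n | X ∈ Z ∧ Xᵀ = -X} ≠ {0} →
        ∃ J : Mat n, J * J = -1 ∧
          {X : Mat n | X ∈ Z ∧ Xᵀ = -X} = {X : Mat n | ∃ c : ℝ, X = c • J}) := by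
  rw [← coe_lieCenter] at hZ
  subst hZ
  refine ⟨fun X hX => existsUnique_symm_add_skew _ (fun _ => transpose_mem_lieCenter hsa) hX,
    fun hne => ?_, fun hne => ?_⟩
  · obtain ⟨S, ⟨hS, hST⟩, hS0⟩ :=
      Set.exists_mem_ne_of_ne_singleton hne ⟨zero_mem _, transpose_zero⟩
    exact symm_lieCenter_eq_smul_one hirr hS hST hS0
  · obtain ⟨K, ⟨hK, hKT⟩, hK0⟩ :=
      Set.exists_mem_ne_of_ne_singleton hne ⟨zero_mem _, by simp⟩
    exact exists_skew_lieCenter_eq_smul hirr hK hKT hK0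
end
end

section
/- Let G be a closed, connected, self-adjoint, noncompact subgroup of GL(n,ℝ), and let v ∈ ℝⁿ be a nonzero vector with G(v) unbounded. If λ⁻(v) < 0, then the zero vector lies in the closure of the orbit G(v). -/
open Matrix Filter Topology

noncomputable section

/-!
For `X ∈ 𝔓̃_v`, self-adjointness of `G` puts `Xᵀ` in `𝔊`, and since `G` is closed the Lie product
formula `exp (A + B) = lim (exp (A / k) * exp (B / k)) ^ k` makes `𝔊` closed under addition; so the
skew part `X - Xᵀ` lies in `𝔎`, and orthogonality of `X` to it forces `X` to be symmetric. If
moreover `λ_X(v) < 0`, then `v` only has components along eigenvectors of `X` with negative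
eigenvalues, so `exp (t X) v → 0` as `t → ∞`, and these vectors lie in `G(v)`.
-/

open NormedSpace RealInnerProductSpace

section BanachAlgebra

variable {𝔸 : Type*} [NormedRing 𝔸] [NormOneClass 𝔸]

theorem norm_pow_sub_pow_le {a b : 𝔸} {M : ℝ} (hM : 1 ≤ M) (ha : ‖a‖ ≤ M) (hb : ‖b‖ ≤ M)
    (k : ℕ) : ‖a ^ k - b ^ k‖ ≤ k * M ^ k * ‖a - b‖ := by
  induction k with
  | zero => simp
  | succ k ih =>
    have hak : ‖a ^ k‖ ≤ M ^ (k + 1) :=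
      (norm_pow_le a k).trans <| (pow_le_pow_left₀ (norm_nonneg a) ha k).trans <|
        pow_le_pow_right₀ hM k.le_succ
    calc ‖a ^ (k + 1) - b ^ (k + 1)‖ = ‖a ^ k * (a - b) + (a ^ k - b ^ k) * b‖ := by
          congr 1; noncomm_ring
      _ ≤ ‖a ^ k‖ * ‖a - b‖ + ‖a ^ k - b ^ k‖ * ‖b‖ :=
          (norm_add_le _ _).trans (add_le_add (norm_mul_le _ _) (norm_mul_le _ _))
      _ ≤ M ^ (k + 1) * ‖a - b‖ + (k * M ^ k * ‖a - b‖) * M := by gcongr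
      _ = (k + 1 : ℕ) * M ^ (k + 1) * ‖a - b‖ := by push_cast; ring

variable [NormedAlgebra ℝ 𝔸]

theorem norm_exp_le_exp_norm (a : 𝔸) : ‖exp a‖ ≤ Real.exp ‖a‖ := by
  rw [exp_eq_tsum ℝ, Real.exp_eq_exp_ℝ, exp_eq_tsum_div]
  refine (norm_tsum_le_tsum_norm (norm_expSeries_summable' a)).trans <|
    (norm_expSeries_summable' a).tsum_le_tsum (fun k => ?_) (Real.summable_pow_div_factorial ‖a‖)
  rw [norm_smul, norm_inv, Real.norm_natCast, div_eq_inv_mul]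
  gcongr
  exact norm_pow_le a k

variable [CompleteSpace 𝔸]

theorem norm_exp_mul_exp_pow_sub_exp_le (a b : 𝔸) {k : ℕ} (hk : k ≠ 0) :
    ‖(exp ((k : ℝ)⁻¹ • a) * exp ((k : ℝ)⁻¹ • b)) ^ k - exp (a + b)‖ ≤
      Real.exp (‖a‖ + ‖b‖) * (k * ‖exp ((k : ℝ)⁻¹ • a) * exp ((k : ℝ)⁻¹ • b) -
        exp ((k : ℝ)⁻¹ • (a + b))‖) := by
  set s : ℝ := (k : ℝ)⁻¹
  have hs : 0 ≤ s := by positivity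
  have hks : (k : ℝ) * s = 1 := mul_inv_cancel₀ (Nat.cast_ne_zero.mpr hk)
  set M := Real.exp (s * (‖a‖ + ‖b‖))
  have hM : 1 ≤ M := Real.one_le_exp (by positivity)
  have hMk : M ^ k = Real.exp (‖a‖ + ‖b‖) := by
    rw [← Real.exp_nat_mul, ← mul_assoc, hks, one_mul]
  have hP : ‖exp (s • a) * exp (s • b)‖ ≤ M := by
    calc ‖exp (s • a) * exp (s • b)‖ ≤ Real.exp ‖s • a‖ * Real.exp ‖s • b‖ :=
          (norm_mul_le _ _).trans <| mul_le_mul (norm_exp_le_exp_norm _)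
            (norm_exp_le_exp_norm _) (norm_nonneg _) (Real.exp_nonneg _)
      _ = M := by rw [← Real.exp_add, norm_smul, norm_smul, Real.norm_of_nonneg hs, ← mul_add]
  have hQ : ‖exp (s • (a + b))‖ ≤ M := by
    refine (norm_exp_le_exp_norm _).trans (Real.exp_le_exp.mpr ?_)
    rw [norm_smul, Real.norm_of_nonneg hs]
    gcongr
    exact norm_add_le a b
  have hQk : exp (s • (a + b)) ^ k = exp (a + b) := by
    let : NormedAlgebra ℚ 𝔸 := .restrictScalars ℚ ℝ 𝔸
    rw [← NormedSpace.exp_nsmul, ← Nat.cast_smul_eq_nsmul ℝ, smul_smul, hks, one_smul]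
  calc _ = ‖(exp (s • a) * exp (s • b)) ^ k - exp (s • (a + b)) ^ k‖ := by rw [hQk]
    _ ≤ k * M ^ k * ‖exp (s • a) * exp (s • b) - exp (s • (a + b))‖ :=
        norm_pow_sub_pow_le hM hP hQ k
    _ = _ := by rw [hMk]; ring

theorem tendsto_exp_mul_exp_pow (a b : 𝔸) :
    Tendsto (fun k : ℕ => (exp ((k : ℝ)⁻¹ • a) * exp ((k : ℝ)⁻¹ • b)) ^ k) atTop
      (𝓝 (exp (a + b))) := by
  set F : ℝ → 𝔸 := fun s => exp (s • a) * exp (s • b) - exp (s • (a + b))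
  have hF : HasDerivAt F 0 0 := by
    have := ((hasDerivAt_exp_smul_const a (0 : ℝ)).mul (hasDerivAt_exp_smul_const b 0)).sub
      (hasDerivAt_exp_smul_const (a + b) 0)
    simp only [zero_smul, exp_zero, one_mul, mul_one, sub_self] at this
    exact this
  have hF0 : F 0 = 0 := by simp [F]
  have hFo : (fun s => F s) =o[𝓝 0] fun s => s := by
    simpa [hF0] using hasDerivAt_iff_isLittleO_nhds_zero.mp hF
  have hFk : Tendsto (fun k : ℕ => (k : ℝ) * ‖F (k : ℝ)⁻¹‖) atTop (𝓝 0) := by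
    refine ((hFo.comp_tendsto tendsto_inv_atTop_nhds_zero_nat).norm_left
      |>.tendsto_div_nhds_zero).congr fun k => ?_
    simp [div_eq_mul_inv, mul_comm]
  refine tendsto_iff_norm_sub_tendsto_zero.mpr <| squeeze_zero' (.of_forall fun _ => norm_nonneg _)
    ?_ (by simpa using hFk.const_mul (Real.exp (‖a‖ + ‖b‖)))
  filter_upwards [eventually_ne_atTop 0] with k hk
  exact norm_exp_mul_exp_pow_sub_exp_le a b hk

end BanachAlgebra

namespace Matrix

variable {m : Type*} [Fintype m] [DecidableEq m]

theorem tendsto_exp_mul_exp_pow (A B : Matrix m m ℝ) :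
    Tendsto (fun k : ℕ => (exp ((k : ℝ)⁻¹ • A) * exp ((k : ℝ)⁻¹ • B)) ^ k) atTop
      (𝓝 (exp (A + B))) := by
  -- The operator norm satisfies `‖1‖ = 1` only for nonempty `m`; otherwise the ring is trivial.
  rcases isEmpty_or_nonempty m with hm | hm
  · exact tendsto_const_nhds.congr fun _ => Subsingleton.elim _ _
  · let : NormedRing (Matrix m m ℝ) := Matrix.linftyOpNormedRing
    let : NormedAlgebra ℝ (Matrix m m ℝ) := Matrix.linftyOpNormedAlgebra
    have : NormOneClass (Matrix m m ℝ) := linfty_opNormOneClass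
    exact _root_.tendsto_exp_mul_exp_pow A B

theorem exp_mulVec_of_mulVec_eq_smul {A : Matrix m m ℝ} {w : m → ℝ} {μ : ℝ}
    (h : A *ᵥ w = μ • w) : exp A *ᵥ w = Real.exp μ • w := by
  let : NormedRing (Matrix m m ℝ) := Matrix.linftyOpNormedRing
  let : NormedAlgebra ℝ (Matrix m m ℝ) := Matrix.linftyOpNormedAlgebra
  have hpow : ∀ k : ℕ, A ^ k *ᵥ w = μ ^ k • w := by
    intro k
    induction k with
    | zero => simp
    | succ k ih => rw [pow_succ, ← mulVec_mulVec, h, mulVec_smul, ih, smul_smul, ← pow_succ']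
  have hseries := (exp_series_hasSum_exp' (𝕂 := ℝ) A).map (mulVec.addMonoidHomLeft w)
    (continuous_id.matrix_mulVec continuous_const)
  refine hseries.unique ?_
  simp only [Function.comp_def, mulVec.addMonoidHomLeft, AddMonoidHom.coe_mk, ZeroHom.coe_mk,
    smul_mulVec, hpow, smul_smul]
  rw [Real.exp_eq_exp_ℝ]
  exact (exp_series_hasSum_exp' (𝕂 := ℝ) μ).smul_const w

end Matrix

section Spectral

variable {n : ℕ}

theorem hasComp_of_inner_ne_zero {X : Mat n} {v w : Euc n} {μ : ℝ}
    (hw : w ∈ Module.End.eigenspace (toEuclideanLin X) μ) (hwv : ⟪w, v⟫ ≠ 0) :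
    hasComp X v μ := by
  rw [hasComp, Ne, Submodule.orthogonalProjectionOnto_eq_zero_iff]
  exact fun hv => hwv ((Submodule.mem_orthogonal _ v).mp hv w hw)

theorem hasEigenvalue_of_hasComp {X : Mat n} {v : Euc n} {μ : ℝ}
    (h : hasComp X v μ) : Module.End.HasEigenvalue (toEuclideanLin X) μ := by
  rw [Module.End.hasEigenvalue_iff]
  intro hbot
  apply h
  simp [hbot]

theorem le_lambdaOf {X : Mat n} {v : Euc n} {μ : ℝ} (h : hasComp X v μ) : μ ≤ lambdaOf X v :=
  le_csSup ((Module.End.finite_hasEigenvalue (toEuclideanLin X)).subset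
    fun _ => hasEigenvalue_of_hasComp).bddAbove h

theorem tendsto_act_mexp_smul_of_lambdaOf_neg {X : Mat n} (hX : X.IsHermitian) {v : Euc n}
    (hv : lambdaOf X v < 0) : Tendsto (fun t : ℝ => act (mexp (t • X)) v) atTop (𝓝 0) := by
  set b := hX.eigenvectorBasis
  set μ := hX.eigenvalues
  have hexp (t : ℝ) (j : Fin n) :
      toEuclideanLin (mexp (t • X)) (b j) = Real.exp (t * μ j) • b j := by
    rw [toLpLin_apply, mexp, exp_mulVec_of_mulVec_eq_smul (μ := t * μ j)]
    · rfl
    · rw [smul_mulVec, hX.mulVec_eigenvectorBasis, smul_smul]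
  have hneg (j : Fin n) (hj : ⟪b j, v⟫ ≠ 0) : μ j < 0 := by
    have hbj : b j ∈ Module.End.eigenspace (toEuclideanLin X) (μ j) := by
      rw [Module.End.mem_eigenspace_iff, toLpLin_apply, hX.mulVec_eigenvectorBasis]
      rfl
    exact (le_lambdaOf (hasComp_of_inner_ne_zero hbj hj)).trans_lt hv
  have hsum (t : ℝ) : act (mexp (t • X)) v = ∑ j, (⟪b j, v⟫ * Real.exp (t * μ j)) • b j := by
    conv_lhs => rw [← b.sum_repr' v]
    simp only [act, map_sum, map_smul, hexp, smul_smul]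
  simp only [hsum]
  have hterm (j : Fin n) :
      Tendsto (fun t : ℝ => (⟪b j, v⟫ * Real.exp (t * μ j)) • b j) atTop (𝓝 0) := by
    by_cases hj : ⟪b j, v⟫ = 0
    · simp [hj]
    · have hexp0 : Tendsto (fun t : ℝ => Real.exp (t * μ j)) atTop (𝓝 0) :=
        Real.tendsto_exp_atBot.comp (tendsto_id.atTop_mul_const_of_neg (hneg j hj))
      simpa using (hexp0.const_mul ⟪b j, v⟫).smul_const (b j)
  simpa using tendsto_finsetSum Finset.univ fun j _ => hterm j

end Spectral

section LieAlgebra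

variable {n : ℕ} {G : Subgroup (GL (Fin n) ℝ)}

theorem neg_mem_lieAlgOf {X : Mat n} (hX : X ∈ lieAlgOf G) : -X ∈ lieAlgOf G := fun t => by
  simpa only [smul_neg, neg_smul] using hX (-t)

theorem transpose_mem_lieAlgOf (hG : IsSelfAdjointSubgroup G) {X : Mat n}
    (hX : X ∈ lieAlgOf G) : Xᵀ ∈ lieAlgOf G := fun t => by
  obtain ⟨g, hg, hgX⟩ := hX t
  obtain ⟨h, hh, hhg⟩ := hG g hg
  exact ⟨h, hh, by rw [hhg, hgX, mexp, mexp, ← Matrix.exp_transpose, Matrix.transpose_smul]⟩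

theorem add_mem_lieAlgOf (hG : IsClosed (G : Set (GL (Fin n) ℝ))) {X Y : Mat n}
    (hX : X ∈ lieAlgOf G) (hY : Y ∈ lieAlgOf G) : X + Y ∈ lieAlgOf G := by
  intro t
  choose g hgG hg using fun k : ℕ => hX ((k : ℝ)⁻¹ * t)
  choose h hhG hh using fun k : ℕ => hY ((k : ℝ)⁻¹ * t)
  let : NormedRing (Mat n) := Matrix.linftyOpNormedRing
  let : NormedAlgebra ℝ (Mat n) := Matrix.linftyOpNormedAlgebra
  set E : GL (Fin n) ℝ := (Matrix.isUnit_exp (t • (X + Y))).unit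
  have hlim : Tendsto (fun k : ℕ => (g k * h k) ^ k) atTop (𝓝 E) := by
    refine (Units.isOpenEmbedding_val (R := Mat n)).tendsto_nhds_iff.mpr ?_
    have := Matrix.tendsto_exp_mul_exp_pow (t • X) (t • Y)
    simp only [E, Function.comp_def, Units.val_pow_eq_pow_val, Units.val_mul, hg, hh, mexp,
      mul_smul, smul_add, IsUnit.unit_spec] at this ⊢
    exact this
  exact ⟨E, hG.mem_of_tendsto hlim (.of_forall fun k => pow_mem (mul_mem (hgG k) (hhG k)) k), rfl⟩

theorem act_mexp_mem_orbitOf {X : Mat n} (hX : X ∈ lieAlgOf G) (v : Euc n) (t : ℝ) :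
    act (mexp (t • X)) v ∈ orbitOf G v := by
  obtain ⟨g, hg, hgX⟩ := hX t
  exact ⟨g, hg, by rw [hgX]⟩

end LieAlgebra

section TildeP

variable {n : ℕ}

theorem minner_sub_transpose_self (X : Mat n) :
    minner (X - Xᵀ) (X - Xᵀ) = 2 * minner X (X - Xᵀ) := by
  have h₁ : (Xᵀ * Xᵀ).trace = (X * X).trace := by
    rw [← Matrix.transpose_mul, Matrix.trace_transpose]
  have h₂ : (Xᵀ * X).trace = (X * Xᵀ).trace := Matrix.trace_mul_comm _ _
  simp only [minner, Matrix.transpose_sub, Matrix.transpose_transpose, Matrix.sub_mul,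
    Matrix.mul_sub, Matrix.trace_sub, h₁, h₂]
  ring

theorem eq_zero_of_minner_self_eq_zero {A : Mat n} (h : minner A A = 0) : A = 0 := by
  rwa [minner, ← Matrix.conjTranspose_eq_transpose_of_trivial,
    Matrix.trace_mul_conjTranspose_self_eq_zero_iff] at h

theorem isHermitian_of_mem_tildeP {G : Subgroup (GL (Fin n) ℝ)}
    (hclosed : IsClosed (G : Set (GL (Fin n) ℝ))) (hsa : IsSelfAdjointSubgroup G) {v : Euc n}
    {X : Mat n} (hX : X ∈ tildeP G v) : X.IsHermitian := by
  have hskew : X - Xᵀ ∈ kSet G := by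
    refine ⟨?_, by rw [Matrix.transpose_sub, Matrix.transpose_transpose, neg_sub]⟩
    rw [sub_eq_add_neg]
    exact add_mem_lieAlgOf hclosed hX.1 (neg_mem_lieAlgOf (transpose_mem_lieAlgOf hsa hX.1))
  have h := eq_zero_of_minner_self_eq_zero <| by
    rw [minner_sub_transpose_self, hX.2 _ (.inl hskew), mul_zero]
  rw [sub_eq_zero] at h
  exact (Matrix.conjTranspose_eq_transpose_of_trivial X).trans h.symm

theorem exists_mem_tildeP_lambdaOf_neg {G : Subgroup (GL (Fin n) ℝ)} {v : Euc n}
    (h : lamMinus G v < 0) : ∃ X ∈ tildeP G v, lambdaOf X v < 0 := by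
  by_contra! hge
  refine h.not_ge (Real.sInf_nonneg ?_)
  rintro _ ⟨X, hX, -, rfl⟩
  exact hge X hX

end TildeP

theorem stmt13_general {n : ℕ} (G : Subgroup (GL (Fin n) ℝ))
    (hclosed : IsClosed (G : Set (GL (Fin n) ℝ)))
    (hsa : IsSelfAdjointSubgroup G)
    (v : Euc n)
    (hneg : lamMinus G v < 0) :
    (0 : Euc n) ∈ closure (orbitOf G v) := by
  obtain ⟨X, hX, hXv⟩ := exists_mem_tildeP_lambdaOf_neg hneg
  exact mem_closure_of_tendsto
    (tendsto_act_mexp_smul_of_lambdaOf_neg (isHermitian_of_mem_tildeP hclosed hsa hX) hXv)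
    (.of_forall (act_mexp_mem_orbitOf hX.1 v))

/-- Let G be a closed, connected, self-adjoint, noncompact subgroup of GL(n,ℝ)
and v ∈ ℝⁿ nonzero with G(v) unbounded. If λ⁻(v) < 0 then 0 lies in the closure of G(v). -/
theorem stmt13 {n : ℕ} (G : Subgroup (GL (Fin n) ℝ))
    (hclosed : IsClosed (G : Set (GL (Fin n) ℝ)))
    (hconn : IsConnected (G : Set (GL (Fin n) ℝ)))
    (hsa : IsSelfAdjointSubgroup G)
    (hnc : ¬ IsCompact (G : Set (GL (Fin n) ℝ)))
    (v : Euc n) (hv : v ≠ 0)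
    (hunb : ¬ Bornology.IsBounded (orbitOf G v))
    (hneg : lamMinus G v < 0) :
    (0 : Euc n) ∈ closure (orbitOf G v) :=
  stmt13_general G hclosed hsa v hneg

end
end
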